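/- Let N ≥ 1 and let B' and C' be N×N real matrices with companion matrix K = [[0, 1], [−C', −B']]. Then K is diagonalizable over ℝ if and only if there exist an invertible N×N real matrix V₁, an N×N real matrix Q, and real diagonal matrices D₁, D₂ with det(D₁Q − QD₂) ≠ 0 such that, setting A₁ = V₁·D₁·V₁⁻¹ and A₂ = (V₁(D₁Q − QD₂))·D₂·(V₁(D₁Q − QD₂))⁻¹, one has C' = A₂·A₁ and B' = −(A₁ + A₂); equivalently, the second-order pencil factorizes as S(λ) = (λ·1 − A₂)·(λ·1 − A₁) for all λ ∈ ℝ, a product of two first-order pencils each similar to a real diagonal pencil. -/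

import Mathlib

/-!
If `K * P = P * diagonal d` with `P` invertible, the top `N` rows of `P` are independent, so some
`N` columns of `P` have an invertible top block `V`; moving them to the front, `K * P = P * D`
forces `P = [[V, V Q], [V D₁, V Q D₂]]` with `(V, D₁)` and `(V Q, D₂)` block eigenpairs of
`S(λ) = λ² + λ B' + C'`, and the Schur complement shows that such a `P` is invertible iff `V` and
`D₁ Q - Q D₂` are. The eigenpair equations are in turn equivalent to the factorization: with
`A₁ = V D₁ V⁻¹` and `A₂ = -B' - A₁`, the first one says `C' = A₂ A₁`, and the second one then reads
`A₂ W = W D₂` for `W = A₁ V Q - V Q D₂ = V (D₁ Q - Q D₂)`.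
-/

open Matrix

/-- The columns of `[V; V D]` span a subspace invariant under the companion matrix of
`λ² + λ B + C`, which acts on it by `D`. -/
def IsBlockEigenpair {R : Type*} [Ring R] (B C V D : R) : Prop :=
  V * D * D + B * V * D + C * V = 0

section Ring

variable {R : Type*} [Ring R]

theorem isBlockEigenpair_neg_add_mul_iff (A₁ A₂ V D : R) :
    IsBlockEigenpair (-(A₁ + A₂)) (A₂ * A₁) V D ↔
      A₂ * (A₁ * V - V * D) = (A₁ * V - V * D) * D := by
  have hfactor : V * D * D + -(A₁ + A₂) * V * D + A₂ * A₁ * V =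
      A₂ * (A₁ * V - V * D) - (A₁ * V - V * D) * D := by noncomm_ring
  rw [IsBlockEigenpair, hfactor, sub_eq_zero]

theorem eq_mul_and_eq_neg_add_iff_isBlockEigenpair {A₁ A₂ B C V Q D₁ D₂ : R}
    (hV : IsUnit V) (hW : IsUnit (V * (D₁ * Q - Q * D₂)))
    (h₁ : A₁ * V = V * D₁) (h₂ : A₂ * (V * (D₁ * Q - Q * D₂)) = V * (D₁ * Q - Q * D₂) * D₂) :
    (C = A₂ * A₁ ∧ B = -(A₁ + A₂)) ↔
      IsBlockEigenpair B C V D₁ ∧ IsBlockEigenpair B C (V * Q) D₂ := by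
  have hW_eq : A₁ * (V * Q) - V * Q * D₂ = V * (D₁ * Q - Q * D₂) := by
    rw [← mul_assoc, h₁]; noncomm_ring
  constructor
  · rintro ⟨rfl, rfl⟩
    rw [isBlockEigenpair_neg_add_mul_iff, isBlockEigenpair_neg_add_mul_iff, h₁, sub_self, hW_eq]
    exact ⟨by simp, h₂⟩
  · rintro ⟨e₁, e₂⟩
    obtain ⟨A₂', rfl⟩ : ∃ A₂', B = -(A₁ + A₂') := ⟨-B - A₁, by abel⟩
    have hC : (C - A₂' * A₁) * V = 0 :=
      calc (C - A₂' * A₁) * V = V * D₁ * D₁ + -(A₁ + A₂') * V * D₁ + C * V -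
            (A₂' * (A₁ * V - V * D₁) - (A₁ * V - V * D₁) * D₁) := by noncomm_ring
        _ = 0 := by rw [e₁, h₁]; simp
    obtain rfl : C = A₂' * A₁ := sub_eq_zero.1 (hV.mul_left_eq_zero.1 hC)
    rw [isBlockEigenpair_neg_add_mul_iff, hW_eq, ← h₂, hW.mul_left_inj] at e₂
    rw [e₂]
    exact ⟨rfl, rfl⟩

end Ring

section BlockMatrix

variable {n : Type*} [Fintype n] [DecidableEq n]

theorem companion_mul_fromBlocks_eq_iff {R : Type*} [Ring R]
    (B C V₁ V₂ W₁ W₂ D₁ D₂ : Matrix n n R) :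
    fromBlocks 0 1 (-C) (-B) * fromBlocks V₁ V₂ W₁ W₂ =
        fromBlocks V₁ V₂ W₁ W₂ * fromBlocks D₁ 0 0 D₂ ↔
      W₁ = V₁ * D₁ ∧ W₂ = V₂ * D₂ ∧ IsBlockEigenpair B C V₁ D₁ ∧ IsBlockEigenpair B C V₂ D₂ := by
  simp only [fromBlocks_multiply, fromBlocks_inj, Matrix.zero_mul, Matrix.one_mul, zero_add,
    Matrix.mul_zero, add_zero, IsBlockEigenpair]
  constructor
  · rintro ⟨rfl, rfl, h₁, h₂⟩
    refine ⟨rfl, rfl, ?_, ?_⟩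
    · rw [← h₁]; noncomm_ring
    · rw [← h₂]; noncomm_ring
  · rintro ⟨rfl, rfl, h₁, h₂⟩
    refine ⟨rfl, rfl, ?_, ?_⟩
    · rw [← sub_eq_zero, ← neg_eq_zero, ← h₁]; noncomm_ring
    · rw [← sub_eq_zero, ← neg_eq_zero, ← h₂]; noncomm_ring

theorem companion_mul_fromBlocks_eq_mul_diagonal_iff {R : Type*} [Ring R]
    (B C V Q : Matrix n n R) (d₁ d₂ : n → R) :
    fromBlocks 0 1 (-C) (-B) * fromBlocks V (V * Q) (V * diagonal d₁) (V * Q * diagonal d₂) =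
        fromBlocks V (V * Q) (V * diagonal d₁) (V * Q * diagonal d₂) *
          diagonal (Sum.elim d₁ d₂) ↔
      IsBlockEigenpair B C V (diagonal d₁) ∧ IsBlockEigenpair B C (V * Q) (diagonal d₂) := by
  rw [← fromBlocks_diagonal, companion_mul_fromBlocks_eq_iff]
  simp

variable {R : Type*} [CommRing R]

theorem det_fromBlocks_mul_mul (V Q D₁ D₂ : Matrix n n R) :
    (fromBlocks V (V * Q) (V * D₁) (V * Q * D₂)).det = V.det * V.det * (Q * D₂ - D₁ * Q).det := by
  have hfactor : fromBlocks V (V * Q) (V * D₁) (V * Q * D₂) =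
      fromBlocks V 0 0 V * fromBlocks 1 Q D₁ (Q * D₂) := by
    simp [fromBlocks_multiply, Matrix.mul_assoc]
  rw [hfactor, det_mul, det_fromBlocks_zero₂₁, det_fromBlocks_one₁₁]

theorem isUnit_det_fromBlocks_mul_mul_iff (V Q D₁ D₂ : Matrix n n R) :
    IsUnit (fromBlocks V (V * Q) (V * D₁) (V * Q * D₂)).det ↔
      IsUnit V.det ∧ IsUnit (D₁ * Q - Q * D₂).det := by
  rw [det_fromBlocks_mul_mul, ← neg_sub, det_neg, IsUnit.mul_iff, IsUnit.mul_iff, and_self,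
    IsUnit.mul_iff, and_iff_right ((isUnit_neg_one (α := R)).pow _)]

theorem pencil_factorization_iff_isBlockEigenpair {B C V Q D₁ D₂ : Matrix n n R}
    (hV : IsUnit V.det) (hW : IsUnit (D₁ * Q - Q * D₂).det) :
    (C = V * (D₁ * Q - Q * D₂) * D₂ * (V * (D₁ * Q - Q * D₂))⁻¹ * (V * D₁ * V⁻¹) ∧
        B = -(V * D₁ * V⁻¹ + V * (D₁ * Q - Q * D₂) * D₂ * (V * (D₁ * Q - Q * D₂))⁻¹)) ↔
      IsBlockEigenpair B C V D₁ ∧ IsBlockEigenpair B C (V * Q) D₂ := by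
  have hVW : IsUnit (V * (D₁ * Q - Q * D₂)).det := by rw [det_mul]; exact hV.mul hW
  exact eq_mul_and_eq_neg_add_iff_isBlockEigenpair ((isUnit_iff_isUnit_det _).2 hV)
    ((isUnit_iff_isUnit_det _).2 hVW) (nonsing_inv_mul_cancel_right _ _ hV)
    (nonsing_inv_mul_cancel_right _ _ hVW)

end BlockMatrix

section ColumnSelection

variable {F : Type*} [Field F]

theorem exists_injective_isUnit_submatrix_of_linearIndependent_row {m ι : Type*} [Fintype m]
    [DecidableEq m] [Fintype ι] {T : Matrix m ι F} (hT : LinearIndependent F T.row) :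
    ∃ g : m → ι, Function.Injective g ∧ IsUnit (T.submatrix id g) := by
  have hspan : Submodule.span F (Set.range T.col) = ⊤ := by
    apply Submodule.eq_top_of_finrank_eq
    rw [← rank_eq_finrank_span_cols, hT.rank_matrix, Module.finrank_fintype_fun_eq_card]
  obtain ⟨κ, a, ha, hspan_a, hli⟩ := exists_linearIndependent' F T.col
  let b : Module.Basis κ F (m → F) := .mk hli (by rw [hspan_a, hspan])
  let e : m ≃ κ := (Pi.basisFun F m).indexEquiv b
  exact ⟨a ∘ e, ha.comp e.injective,
    linearIndependent_cols_iff_isUnit.1 (hli.comp e e.injective)⟩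

theorem exists_perm_isUnit_toBlocks₁₁ {m n : Type*} [Fintype m] [Fintype n] [DecidableEq m]
    [DecidableEq n] {P : Matrix (m ⊕ n) (m ⊕ n) F} (hP : IsUnit P) :
    ∃ σ : Equiv.Perm (m ⊕ n), IsUnit (P.submatrix id σ).toBlocks₁₁ := by
  obtain ⟨g, hg, hunit⟩ := exists_injective_isUnit_submatrix_of_linearIndependent_row
    (T := P.submatrix Sum.inl id) ((linearIndependent_rows_iff_isUnit.2 hP).comp _ Sum.inl_injective)
  obtain ⟨σ, hσ⟩ := Equiv.Perm.exists_extending_pair Sum.inl g Sum.inl_injective hg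
  refine ⟨σ, ?_⟩
  convert hunit using 1
  ext i j
  simp [toBlocks₁₁, hσ]

end ColumnSelection

theorem mul_submatrix_eq_submatrix_mul_diagonal {ι R : Type*} [Fintype ι] [DecidableEq ι]
    [Semiring R] {M P : Matrix ι ι R} {d : ι → R} (h : M * P = P * diagonal d)
    (σ : Equiv.Perm ι) : M * P.submatrix id σ = P.submatrix id σ * diagonal (d ∘ σ) := by
  rw [← submatrix_diagonal_equiv, submatrix_mul_equiv, ← h]
  exact (submatrix_mul M P id id σ Function.bijective_id).symm

section Diagonalization

variable {n : Type*} [Fintype n] [DecidableEq n]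

theorem exists_eq_fromBlocks_of_companion_mul_eq {R : Type*} [CommRing R]
    {B C : Matrix n n R} {P : Matrix (n ⊕ n) (n ⊕ n) R} {d : n ⊕ n → R}
    (hV : IsUnit P.toBlocks₁₁.det) (h : fromBlocks 0 1 (-C) (-B) * P = P * diagonal d) :
    ∃ (V Q : Matrix n n R) (d₁ d₂ : n → R),
      P = fromBlocks V (V * Q) (V * diagonal d₁) (V * Q * diagonal d₂) ∧ d = Sum.elim d₁ d₂ := by
  have hd : diagonal d = fromBlocks (diagonal (d ∘ Sum.inl)) 0 0 (diagonal (d ∘ Sum.inr)) := by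
    rw [fromBlocks_diagonal, Sum.elim_comp_inl_inr]
  rw [← fromBlocks_toBlocks P, hd, companion_mul_fromBlocks_eq_iff] at h
  obtain ⟨h₁, h₂, -, -⟩ := h
  refine ⟨P.toBlocks₁₁, P.toBlocks₁₁⁻¹ * P.toBlocks₁₂, d ∘ Sum.inl, d ∘ Sum.inr, ?_,
    (Sum.elim_comp_inl_inr d).symm⟩
  rw [mul_nonsing_inv_cancel_left _ _ hV, ← h₁, ← h₂, fromBlocks_toBlocks]

theorem exists_isBlockEigenpair_of_companion_eq_conj {F : Type*} [Field F] {B C : Matrix n n F}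
    {P : Matrix (n ⊕ n) (n ⊕ n) F} {d : n ⊕ n → F} (hP : IsUnit P.det)
    (hK : fromBlocks 0 1 (-C) (-B) = P * diagonal d * P⁻¹) :
    ∃ (V Q : Matrix n n F) (d₁ d₂ : n → F),
      IsUnit V.det ∧ IsUnit (diagonal d₁ * Q - Q * diagonal d₂).det ∧
        IsBlockEigenpair B C V (diagonal d₁) ∧ IsBlockEigenpair B C (V * Q) (diagonal d₂) := by
  have hKP : fromBlocks 0 1 (-C) (-B) * P = P * diagonal d := by
    rw [hK, nonsing_inv_mul_cancel_right _ _ hP]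
  rw [← isUnit_iff_isUnit_det] at hP
  obtain ⟨σ, hσ⟩ := exists_perm_isUnit_toBlocks₁₁ hP
  have hPσ : IsUnit (P.submatrix id σ).det :=
    (isUnit_iff_isUnit_det _).1 ((isUnit_submatrix_equiv (Equiv.refl _) σ).2 hP)
  have hKPσ := mul_submatrix_eq_submatrix_mul_diagonal hKP σ
  obtain ⟨V, Q, d₁, d₂, hPσ_eq, hdσ⟩ :=
    exists_eq_fromBlocks_of_companion_mul_eq ((isUnit_iff_isUnit_det _).1 hσ) hKPσ
  rw [hPσ_eq, hdσ] at hKPσ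
  rw [hPσ_eq, isUnit_det_fromBlocks_mul_mul_iff] at hPσ
  exact ⟨V, Q, d₁, d₂, hPσ.1, hPσ.2, (companion_mul_fromBlocks_eq_mul_diagonal_iff ..).1 hKPσ⟩

theorem companion_eq_conj_of_isBlockEigenpair {R : Type*} [CommRing R] {B C V Q : Matrix n n R}
    {d₁ d₂ : n → R} (hV : IsUnit V.det) (hW : IsUnit (diagonal d₁ * Q - Q * diagonal d₂).det)
    (e₁ : IsBlockEigenpair B C V (diagonal d₁)) (e₂ : IsBlockEigenpair B C (V * Q) (diagonal d₂)) :
    ∃ (P : Matrix (n ⊕ n) (n ⊕ n) R) (d : n ⊕ n → R),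
      IsUnit P.det ∧ fromBlocks 0 1 (-C) (-B) = P * diagonal d * P⁻¹ := by
  have hP := (isUnit_det_fromBlocks_mul_mul_iff V Q (diagonal d₁) (diagonal d₂)).2 ⟨hV, hW⟩
  refine ⟨_, Sum.elim d₁ d₂, hP, ?_⟩
  rw [← (companion_mul_fromBlocks_eq_mul_diagonal_iff B C V Q d₁ d₂).2 ⟨e₁, e₂⟩,
    mul_nonsing_inv_cancel_right _ _ hP]

end Diagonalization

theorem companion_diagonalizable_iff_pencil_factorizes_general
    (N : ℕ) (B' C' : Matrix (Fin N) (Fin N) ℝ) :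
    (∃ (P : Matrix (Fin N ⊕ Fin N) (Fin N ⊕ Fin N) ℝ) (d : Fin N ⊕ Fin N → ℝ),
        IsUnit P.det ∧
        Matrix.fromBlocks 0 1 (-C') (-B') = P * Matrix.diagonal d * P⁻¹) ↔
      (∃ (V₁ Q : Matrix (Fin N) (Fin N) ℝ) (d₁ d₂ : Fin N → ℝ),
        V₁.det ≠ 0 ∧
        (Matrix.diagonal d₁ * Q - Q * Matrix.diagonal d₂).det ≠ 0 ∧
        C' =
          ((V₁ * (Matrix.diagonal d₁ * Q - Q * Matrix.diagonal d₂)) * Matrix.diagonal d₂ *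
              (V₁ * (Matrix.diagonal d₁ * Q - Q * Matrix.diagonal d₂))⁻¹) *
            (V₁ * Matrix.diagonal d₁ * V₁⁻¹) ∧
        B' =
          -((V₁ * Matrix.diagonal d₁ * V₁⁻¹) +
            (V₁ * (Matrix.diagonal d₁ * Q - Q * Matrix.diagonal d₂)) * Matrix.diagonal d₂ *
              (V₁ * (Matrix.diagonal d₁ * Q - Q * Matrix.diagonal d₂))⁻¹)) := by
  constructor
  · rintro ⟨P, d, hP, hK⟩
    obtain ⟨V, Q, d₁, d₂, hV, hW, he⟩ := exists_isBlockEigenpair_of_companion_eq_conj hP hK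
    exact ⟨V, Q, d₁, d₂, hV.ne_zero, hW.ne_zero,
      (pencil_factorization_iff_isBlockEigenpair hV hW).2 he⟩
  · rintro ⟨V, Q, d₁, d₂, hV, hW, hfactor⟩
    rw [← isUnit_iff_ne_zero] at hV hW
    obtain ⟨e₁, e₂⟩ := (pencil_factorization_iff_isBlockEigenpair hV hW).1 hfactor
    exact companion_eq_conj_of_isBlockEigenpair hV hW e₁ e₂

/-- the companion matrix `K = [[0, 1], [−C', −B']]` is diagonalizable
over ℝ iff the second-order pencil `S(λ) = λ²·1 + λ·B' + C'` factorizes as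
`S(λ) = (λ·1 − A₂)(λ·1 − A₁)`, i.e. `C' = A₂·A₁` and `B' = −(A₁ + A₂)`, with
`A₁ = V₁·D₁·V₁⁻¹` and `A₂ = (V₁·(D₁Q − QD₂))·D₂·(V₁·(D₁Q − QD₂))⁻¹` for some
invertible `V₁`, some `Q`, and real diagonal `D₁, D₂` with `det(D₁Q − QD₂) ≠ 0`. -/
theorem companion_diagonalizable_iff_pencil_factorizes
    (N : ℕ) (hN : 1 ≤ N) (B' C' : Matrix (Fin N) (Fin N) ℝ) :
    (∃ (P : Matrix (Fin N ⊕ Fin N) (Fin N ⊕ Fin N) ℝ) (d : Fin N ⊕ Fin N → ℝ),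
        IsUnit P.det ∧
        Matrix.fromBlocks 0 1 (-C') (-B') = P * Matrix.diagonal d * P⁻¹) ↔
      (∃ (V₁ Q : Matrix (Fin N) (Fin N) ℝ) (d₁ d₂ : Fin N → ℝ),
        V₁.det ≠ 0 ∧
        (Matrix.diagonal d₁ * Q - Q * Matrix.diagonal d₂).det ≠ 0 ∧
        C' =
          ((V₁ * (Matrix.diagonal d₁ * Q - Q * Matrix.diagonal d₂)) * Matrix.diagonal d₂ *
              (V₁ * (Matrix.diagonal d₁ * Q - Q * Matrix.diagonal d₂))⁻¹) *
            (V₁ * Matrix.diagonal d₁ * V₁⁻¹) ∧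
        B' =
          -((V₁ * Matrix.diagonal d₁ * V₁⁻¹) +
            (V₁ * (Matrix.diagonal d₁ * Q - Q * Matrix.diagonal d₂)) * Matrix.diagonal d₂ *
              (V₁ * (Matrix.diagonal d₁ * Q - Q * Matrix.diagonal d₂))⁻¹)) :=
  companion_diagonalizable_iff_pencil_factorizes_general N B' C'
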